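/- The norm $\|\cdot\|_1$ on $L^1[0,1]$ is directionally Hadamard differentiable at every $f \in L^1[0,1]$: for every $h \in L^1[0,1]$, every sequence $t_n \to 0$ with $t_n > 0$, and every sequence $h_n \to h$ in $L^1[0,1]$, one has $\lim_{n\to\infty} \frac{\|f + t_n h_n\|_1 - \|f\|_1}{t_n} = \int_{\{x : f(x) \neq 0\}} \operatorname{sgn}(f(x))\,h(x)\,dx + \int_{\{x : f(x) = 0\}} |h(x)|\,dx$. -/

import Mathlib

/-!
The norm is `1`-Lipschitz, so `‖f + tₙ hₙ‖ - ‖f + tₙ h‖ = O(tₙ ‖hₙ - h‖)` and Hadamard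
differentiability reduces to the one-sided Gateaux derivative along `h`. That one is computed
pointwise under the integral: for `t > 0` the quotient `(|a + t b| - |a|) / t` is bounded by `|b|`
and equals `sign a * b` as soon as `a + t b` has the sign of `a` (and `|b|` when `a = 0`), so
dominated convergence applies.
-/

open MeasureTheory Filter Topology

lemma measurable_real_sign : Measurable Real.sign :=
  Measurable.ite (measurableSet_lt measurable_id measurable_const) measurable_const
    (Measurable.ite (measurableSet_lt measurable_const measurable_id) measurable_const
      measurable_const)

lemma abs_real_sign_le_one (a : ℝ) : |Real.sign a| ≤ 1 := by
  rcases Real.sign_apply_eq a with h | h | h <;> simp [h]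

lemma abs_abs_add_mul_sub_abs_div_le (a b : ℝ) {t : ℝ} (ht : 0 < t) :
    |(|a + t * b| - |a|) / t| ≤ |b| := by
  rw [abs_div, abs_of_pos ht, div_le_iff₀ ht]
  calc |(|a + t * b| - |a|)| ≤ |a + t * b - a| := abs_abs_sub_abs_le_abs_sub _ _
    _ = |b| * t := by rw [add_sub_cancel_left, abs_mul, abs_of_pos ht, mul_comm]

lemma abs_add_mul_sub_abs_div_eventuallyEq (a b : ℝ) :
    (fun t => (|a + t * b| - |a|) / t) =ᶠ[𝓝[>] 0]
      fun _ => if a = 0 then |b| else Real.sign a * b := by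
  have hline : Tendsto (fun t : ℝ => a + t * b) (𝓝[>] 0) (𝓝 a) := by
    have : Tendsto (fun t : ℝ => a + t * b) (𝓝 0) (𝓝 (a + 0 * b)) :=
      (continuous_const.add (continuous_id.mul continuous_const)).tendsto 0
    simpa using this.mono_left nhdsWithin_le_nhds
  rcases lt_trichotomy a 0 with ha | rfl | ha
  · filter_upwards [self_mem_nhdsWithin, hline.eventually (gt_mem_nhds ha)]
      with t (ht : 0 < t) hneg
    rw [if_neg ha.ne, Real.sign_of_neg ha, abs_of_neg ha, abs_of_neg hneg]
    field_simp
    ring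
  · filter_upwards [self_mem_nhdsWithin] with t (ht : 0 < t)
    simp [abs_mul, abs_of_pos ht, ht.ne']
  · filter_upwards [self_mem_nhdsWithin, hline.eventually (lt_mem_nhds ha)]
      with t (ht : 0 < t) hpos
    rw [if_neg ha.ne', Real.sign_of_pos ha, abs_of_pos ha, abs_of_pos hpos]
    field_simp
    ring

theorem LipschitzWith.tendsto_slope_of_tendsto_slope_nhdsGT {E : Type*}
    [SeminormedAddCommGroup E] [NormedSpace ℝ E] {φ : E → ℝ} {K : NNReal}
    (hφ : LipschitzWith K φ) {x v : E} {L : ℝ}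
    (hv : Tendsto (fun t : ℝ => (φ (x + t • v) - φ x) / t) (𝓝[>] 0) (𝓝 L))
    {ι : Type*} {l : Filter ι} {t : ι → ℝ} {w : ι → E}
    (ht : Tendsto t l (𝓝[>] 0)) (hw : Tendsto w l (𝓝 v)) :
    Tendsto (fun i => (φ (x + t i • w i) - φ x) / t i) l (𝓝 L) := by
  have herr : Tendsto (fun i => (φ (x + t i • w i) - φ (x + t i • v)) / t i) l (𝓝 0) := by
    have hbound : ∀ᶠ i in l, ‖(φ (x + t i • w i) - φ (x + t i • v)) / t i‖ ≤ K * ‖w i - v‖ := by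
      filter_upwards [ht self_mem_nhdsWithin] with i (hti : 0 < t i)
      rw [Real.norm_eq_abs, abs_div, abs_of_pos hti, div_le_iff₀ hti]
      calc |φ (x + t i • w i) - φ (x + t i • v)|
          ≤ K * ‖(x + t i • w i) - (x + t i • v)‖ := by
            rw [← Real.dist_eq, ← dist_eq_norm]
            exact hφ.dist_le_mul _ _
        _ = K * ‖w i - v‖ * t i := by
          rw [add_sub_add_left_eq_sub, ← smul_sub, norm_smul, Real.norm_of_nonneg hti.le]
          ring
    have hsmall : Tendsto (fun i => (K : ℝ) * ‖w i - v‖) l (𝓝 0) := by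
      simpa using (tendsto_iff_norm_sub_tendsto_zero.mp hw).const_mul (K : ℝ)
    exact squeeze_zero_norm' hbound hsmall
  have hsum := (hv.comp ht).add herr
  rw [add_zero] at hsum
  exact hsum.congr fun i => by simp only [Function.comp_apply]; ring

section L1

variable {α : Type*} [MeasurableSpace α] {μ : Measure α}

lemma MeasureTheory.L1.norm_add_smul_eq_integral (f h : α →₁[μ] ℝ) (t : ℝ) :
    ‖f + t • h‖ = ∫ x, |f x + t * h x| ∂μ := by
  rw [L1.norm_eq_integral_norm]
  refine integral_congr_ae ?_
  filter_upwards [Lp.coeFn_add f (t • h), Lp.coeFn_smul t h] with x hadd hsmul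
  simp only [hadd, hsmul, Pi.add_apply, Pi.smul_apply, smul_eq_mul, Real.norm_eq_abs]

lemma MeasureTheory.L1.tendsto_norm_add_smul_sub_norm_div (f h : α →₁[μ] ℝ) :
    Tendsto (fun t : ℝ => (‖f + t • h‖ - ‖f‖) / t) (𝓝[>] 0)
      (𝓝 (∫ x, (if f x = 0 then |h x| else Real.sign (f x) * h x) ∂μ)) := by
  have hf := L1.integrable_coeFn f
  have hh := L1.integrable_coeFn h
  have hperturbed (t : ℝ) : Integrable (fun x => |f x + t * h x|) μ :=
    (hf.add (hh.const_mul t)).abs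
  have hquot : ∀ t : ℝ, (‖f + t • h‖ - ‖f‖) / t = ∫ x, (|f x + t * h x| - |f x|) / t ∂μ := by
    intro t
    rw [integral_div, MeasureTheory.integral_sub (hperturbed t) hf.abs,
      L1.norm_add_smul_eq_integral, L1.norm_eq_integral_norm]
    simp only [Real.norm_eq_abs]
  simp only [hquot]
  refine tendsto_integral_filter_of_dominated_convergence (fun x => |h x|) ?_ ?_ hh.abs ?_
  · exact .of_forall fun t =>
      (((hperturbed t).sub hf.abs).div_const t).aestronglyMeasurable
  · filter_upwards [self_mem_nhdsWithin] with t (ht : 0 < t)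
    exact .of_forall fun x => abs_abs_add_mul_sub_abs_div_le (f x) (h x) ht
  · exact .of_forall fun x =>
      tendsto_const_nhds.congr' (abs_add_mul_sub_abs_div_eventuallyEq (f x) (h x)).symm

lemma integral_ite_eq_zero_eq_setIntegral_add {f h : α → ℝ} (hf : Measurable f)
    (hh : Integrable h μ) :
    ∫ x, (if f x = 0 then |h x| else Real.sign (f x) * h x) ∂μ
      = (∫ x in {x | f x ≠ 0}, Real.sign (f x) * h x ∂μ) + ∫ x in {x | f x = 0}, |h x| ∂μ := by
  classical
  have hzero : MeasurableSet {x | f x = 0} := hf (measurableSet_singleton 0)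
  have hsign : Integrable (fun x => Real.sign (f x) * h x) μ :=
    hh.bdd_mul (measurable_real_sign.comp hf).aestronglyMeasurable
      (.of_forall fun x => abs_real_sign_le_one (f x))
  rw [add_comm]
  exact integral_piecewise hzero hh.abs.integrableOn hsign.integrableOn

end L1

/-- Directional Hadamard differentiability of the `L¹[0,1]` norm at every `f`:
for every direction `h`, every positive null sequence `tₙ` and every `hₙ → h` in `L¹`,
`(‖f + tₙ hₙ‖₁ - ‖f‖₁)/tₙ → ∫_{f≠0} sgn(f) h + ∫_{f=0} |h|`. -/
theorem L1_norm_hadamard_diff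
    (f h : Lp ℝ 1 (volume.restrict (Set.Icc (0 : ℝ) 1)))
    (t : ℕ → ℝ) (ht0 : ∀ n, 0 < t n) (htlim : Filter.Tendsto t Filter.atTop (nhds 0))
    (hs : ℕ → Lp ℝ 1 (volume.restrict (Set.Icc (0 : ℝ) 1)))
    (hslim : Filter.Tendsto hs Filter.atTop (nhds h)) :
    Filter.Tendsto (fun n => (‖f + t n • hs n‖ - ‖f‖) / t n) Filter.atTop
      (nhds ((∫ x in {x : ℝ | f x ≠ 0}, Real.sign (f x) * h x
                ∂(volume.restrict (Set.Icc (0 : ℝ) 1)))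
             + ∫ x in {x : ℝ | f x = 0}, |h x|
                ∂(volume.restrict (Set.Icc (0 : ℝ) 1)))) := by
  have ht : Tendsto t atTop (𝓝[>] 0) := tendsto_nhdsWithin_iff.2 ⟨htlim, .of_forall ht0⟩
  rw [← integral_ite_eq_zero_eq_setIntegral_add (Lp.stronglyMeasurable f).measurable
    (L1.integrable_coeFn h)]
  exact lipschitzWith_one_norm.tendsto_slope_of_tendsto_slope_nhdsGT
    (L1.tendsto_norm_add_smul_sub_norm_div f h) ht hslim
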